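/- arXiv:1901.09964 — 3 statements merged into one kernel-verified Lean document; each statement's English description precedes it below -/
import Mathlib

section
/- Suppose p ∈ [1,∞), K ∈ (0,∞), 0 < λ < 1, and α > 0. Then there exist N > 0 and a nonnegative measurable function f ∈ X^p satisfying 0 ≤ f ≤ K·(J_α f)^λ almost everywhere in ℝⁿ×ℝ and f = 0 almost everywhere in ℝⁿ×(−∞,0), such that f(x,t) ≥ K^{1/(1−λ)}·(N t^α)^{λ/(1−λ)} and J_α f(x,t) ≥ K^{1/(1−λ)}·(N t^α)^{1/(1−λ)} for all (x,t) with |x|² < t. -/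
open MeasureTheory Real ENNReal

noncomputable section

/-- The kernel `Φ_α(x,t) = (t^{α-1}/Γ(α)) (4πt)^{-n/2} e^{-|x|²/(4t)}` for `t > 0`, `0` otherwise. -/
def Phi (n : ℕ) (α : ℝ) (x : EuclideanSpace ℝ (Fin n)) (t : ℝ) : ℝ :=
  if 0 < t then
    t ^ (α - 1) / Real.Gamma α * (4 * Real.pi * t) ^ (-(n : ℝ) / 2) *
      Real.exp (-‖x‖ ^ 2 / (4 * t))
  else 0

/-- `(J_α f)(x,t) = ∬ Φ_α(x-ξ, t-τ) f(ξ,τ) dξ dτ` (Bochner integral). -/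
def J (n : ℕ) (α : ℝ) (f : EuclideanSpace ℝ (Fin n) × ℝ → ℝ)
    (z : EuclideanSpace ℝ (Fin n) × ℝ) : ℝ :=
  ∫ w : EuclideanSpace ℝ (Fin n) × ℝ, Phi n α (z.1 - w.1) (z.2 - w.2) * f w

/-- `J_α f` as an `[0,∞]`-valued integral (used for nonnegative `f`). -/
def JE (n : ℕ) (α : ℝ) (f : EuclideanSpace ℝ (Fin n) × ℝ → ℝ)
    (z : EuclideanSpace ℝ (Fin n) × ℝ) : ℝ≥0∞ :=
  ∫⁻ w : EuclideanSpace ℝ (Fin n) × ℝ,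
    ENNReal.ofReal (Phi n α (z.1 - w.1) (z.2 - w.2) * f w)

/-- `f ∈ X^p` : `‖f‖_{L^p(ℝⁿ×(-∞,T))} < ∞`  for every `T ∈ ℝ`. -/
def MemXp (n : ℕ) (p : ℝ≥0∞) (f : EuclideanSpace ℝ (Fin n) × ℝ → ℝ) : Prop :=
  ∀ T : ℝ, MemLp f p (volume.restrict {z : EuclideanSpace ℝ (Fin n) × ℝ | z.2 < T})

/-- Condition (2.12): either `p > 1` and `0 < α < (n+2)/(2p)`, or `p = 1` and `0 < α ≤ (n+2)/2`. -/
def Cond (n : ℕ) (p α : ℝ) : Prop :=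
  (1 < p ∧ 0 < α ∧ α < (n + 2) / (2 * p)) ∨ (p = 1 ∧ 0 < α ∧ α ≤ (n + 2) / 2)

end


/-! With `γ = αλ/(1-λ)`, take `f = C t^γ` on the paraboloid `{|x|² < t}` and `f = 0` elsewhere.
For `(x,t)` in the paraboloid, `Φ_α(x-ξ, t-τ)` is bounded below by a multiple of `t^{α-1-n/2}` on
the box `|ξ| < √t/2, t/4 < τ < t/2`, which lies in the paraboloid and has volume of order
`t^{n/2+1}`; hence `J_α f ≥ N t^α f` there. Since `(α + γ) λ = γ`, the choice
`C = K^{1/(1-λ)} N^{λ/(1-λ)}` gives `f = K (N t^α f)^λ ≤ K (J_α f)^λ`. -/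

open Set Metric

noncomputable section

def paraboloid (n : ℕ) : Set (EuclideanSpace ℝ (Fin n) × ℝ) := {z | ‖z.1‖ ^ 2 < z.2}

def profile (n : ℕ) (C γ : ℝ) : EuclideanSpace ℝ (Fin n) × ℝ → ℝ :=
  (paraboloid n).indicator fun z => C * z.2 ^ γ

def sourceBox (n : ℕ) (t : ℝ) : Set (EuclideanSpace ℝ (Fin n) × ℝ) :=
  ball 0 (√t / 2) ×ˢ Ioo (t / 4) (t / 2)

section Paraboloid

variable {n : ℕ}

lemma pos_of_mem_paraboloid {z : EuclideanSpace ℝ (Fin n) × ℝ} (hz : z ∈ paraboloid n) :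
    0 < z.2 :=
  (sq_nonneg _).trans_lt hz

lemma measurableSet_paraboloid : MeasurableSet (paraboloid n) :=
  measurableSet_lt (by fun_prop) measurable_snd

lemma measurable_profile (C γ : ℝ) : Measurable (profile n C γ) :=
  (measurable_const.mul (measurable_snd.pow_const γ)).indicator measurableSet_paraboloid

lemma profile_nonneg {C : ℝ} (hC : 0 ≤ C) (γ : ℝ) (z : EuclideanSpace ℝ (Fin n) × ℝ) :
    0 ≤ profile n C γ z :=
  indicator_nonneg (fun _ hz => mul_nonneg hC (Real.rpow_nonneg (pos_of_mem_paraboloid hz).le _))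
    z

lemma profile_of_mem {C γ : ℝ} {z : EuclideanSpace ℝ (Fin n) × ℝ} (hz : z ∈ paraboloid n) :
    profile n C γ z = C * z.2 ^ γ :=
  indicator_of_mem hz _

lemma profile_of_notMem {C γ : ℝ} {z : EuclideanSpace ℝ (Fin n) × ℝ} (hz : z ∉ paraboloid n) :
    profile n C γ z = 0 :=
  indicator_of_notMem hz _

lemma profile_mul_rpow_of_mem {A N a α : ℝ} (hN : 0 ≤ N) {z : EuclideanSpace ℝ (Fin n) × ℝ}
    (hz : z ∈ paraboloid n) : profile n (A * N ^ a) (α * a) z = A * (N * z.2 ^ α) ^ a := by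
  have ht := pos_of_mem_paraboloid hz
  rw [profile_of_mem hz, Real.mul_rpow hN (Real.rpow_nonneg ht.le _), ← Real.rpow_mul ht.le,
    mul_assoc]

lemma paraboloid_inter_setOf_lt_subset (T : ℝ) :
    paraboloid n ∩ {z | z.2 < T} ⊆ ball 0 (√T) ×ˢ Ioo 0 T := by
  rintro z ⟨hz, hzT⟩
  have ht := pos_of_mem_paraboloid hz
  refine ⟨?_, ht, hzT⟩
  rw [mem_ball_zero_iff]
  exact Real.lt_sqrt (norm_nonneg _) |>.mpr (hz.trans hzT)

lemma memXp_profile (p : ℝ≥0∞) {C γ : ℝ} (hC : 0 ≤ C) (hγ : 0 ≤ γ) :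
    MemXp n p (profile n C γ) := by
  intro T
  have hslab : MeasurableSet {z : EuclideanSpace ℝ (Fin n) × ℝ | z.2 < T} :=
    measurableSet_lt measurable_snd measurable_const
  have hcyl : MemLp ((ball 0 (√T) ×ˢ Ioo 0 T).indicator fun _ => C * T ^ γ) p
      (volume.restrict {z : EuclideanSpace ℝ (Fin n) × ℝ | z.2 < T}) := by
    refine memLp_indicator_const p (measurableSet_ball.prod measurableSet_Ioo) _ (.inr ?_)
    refine ne_top_of_le_ne_top ?_ (Measure.restrict_apply_le _ _)
    rw [Measure.volume_eq_prod, Measure.prod_prod]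
    exact ENNReal.mul_ne_top measure_ball_lt_top.ne measure_Ioo_lt_top.ne
  refine hcyl.of_le (measurable_profile C γ).aestronglyMeasurable
    (ae_restrict_of_forall_mem hslab fun z hzT => ?_)
  by_cases hz : z ∈ paraboloid n
  · have ht := pos_of_mem_paraboloid hz
    rw [profile_of_mem hz, indicator_of_mem (paraboloid_inter_setOf_lt_subset T ⟨hz, hzT⟩),
      Real.norm_of_nonneg (mul_nonneg hC (Real.rpow_nonneg ht.le _)),
      Real.norm_of_nonneg (mul_nonneg hC (Real.rpow_nonneg (ht.trans hzT).le _))]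
    gcongr
    exact hzT.le
  · rw [profile_of_notMem hz, norm_zero]
    exact norm_nonneg _

end Paraboloid

lemma min_rpow_mul_rpow_le_rpow {t s : ℝ} (β : ℝ) (ht : 0 < t) (hts : t / 2 ≤ s) (hst : s ≤ t) :
    min ((2 : ℝ) ^ (-β)) 1 * t ^ β ≤ s ^ β := by
  rcases le_total 0 β with hβ | hβ
  · calc min ((2 : ℝ) ^ (-β)) 1 * t ^ β ≤ 2 ^ (-β) * t ^ β := by gcongr; exact min_le_left _ _
      _ = (t / 2) ^ β := by
        rw [Real.div_rpow ht.le zero_le_two, Real.rpow_neg zero_le_two, inv_mul_eq_div]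
      _ ≤ s ^ β := by gcongr
  · calc min ((2 : ℝ) ^ (-β)) 1 * t ^ β ≤ 1 * t ^ β := by gcongr; exact min_le_right _ _
      _ = t ^ β := one_mul _
      _ ≤ s ^ β := Real.rpow_le_rpow_of_nonpos (by linarith) hst hβ

lemma neg_sq_norm_sub_div_ge {E : Type*} [SeminormedAddCommGroup E] {x ξ : E} {t s : ℝ}
    (hx : ‖x‖ ^ 2 < t) (hξ : ‖ξ‖ < √t / 2) (hts : t / 2 ≤ s) :
    -(9 / 8) ≤ -‖x - ξ‖ ^ 2 / (4 * s) := by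
  have ht : 0 < t := (sq_nonneg _).trans_lt hx
  have hx' : ‖x‖ < √t := Real.lt_sqrt (norm_nonneg _) |>.mpr hx
  have hdist : ‖x - ξ‖ ≤ 3 / 2 * √t := by linarith [norm_sub_le x ξ]
  have hsq : ‖x - ξ‖ ^ 2 ≤ 9 / 4 * t := by
    nlinarith [pow_le_pow_left₀ (norm_nonneg _) hdist 2, Real.sq_sqrt ht.le]
  rw [neg_div, neg_le_neg_iff, div_le_iff₀ (by linarith)]
  linarith

lemma Phi_ge_of_mem_sourceBox {n : ℕ} {α : ℝ} (hα : 0 < α) {x : EuclideanSpace ℝ (Fin n)} {t : ℝ}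
    (hx : ‖x‖ ^ 2 < t) {w : EuclideanSpace ℝ (Fin n) × ℝ} (hw : w ∈ sourceBox n t) :
    min ((2 : ℝ) ^ (-(α - 1))) 1 * t ^ (α - 1) / Real.Gamma α * (4 * π * t) ^ (-(n : ℝ) / 2) *
      Real.exp (-(9 / 8)) ≤ Phi n α (x - w.1) (t - w.2) := by
  obtain ⟨hξ, hτ₁, hτ₂⟩ := hw
  rw [mem_ball_zero_iff] at hξ
  have ht : 0 < t := (sq_nonneg _).trans_lt hx
  have hts : t / 2 ≤ t - w.2 := by linarith
  have hs : 0 < t - w.2 := by linarith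
  have hpow := min_rpow_mul_rpow_le_rpow (α - 1) ht hts (by linarith)
  have hheat : (4 * π * t) ^ (-(n : ℝ) / 2) ≤ (4 * π * (t - w.2)) ^ (-(n : ℝ) / 2) :=
    Real.rpow_le_rpow_of_nonpos (by positivity) (by gcongr; linarith)
      (div_nonpos_of_nonpos_of_nonneg (neg_nonpos.mpr n.cast_nonneg) zero_le_two)
  have hgauss := Real.exp_le_exp.mpr (neg_sq_norm_sub_div_ge hx hξ hts)
  rw [Phi, if_pos hs]
  gcongr

section SourceBox

variable {n : ℕ}

lemma measurableSet_sourceBox (t : ℝ) : MeasurableSet (sourceBox n t) :=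
  measurableSet_ball.prod measurableSet_Ioo

lemma volume_sourceBox {t : ℝ} (ht : 0 < t) :
    volume (sourceBox n t) = ENNReal.ofReal
      ((√t / 2) ^ n * (volume (ball (0 : EuclideanSpace ℝ (Fin n)) 1)).toReal * (t / 4)) := by
  rw [sourceBox, Measure.volume_eq_prod, Measure.prod_prod,
    Measure.addHaar_ball_of_pos _ _ (by positivity), finrank_euclideanSpace_fin, Real.volume_Ioo,
    ENNReal.ofReal_mul (by positivity), ENNReal.ofReal_mul (by positivity),
    ENNReal.ofReal_toReal measure_ball_lt_top.ne]
  ring_nf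

lemma profile_ge_of_mem_sourceBox {C γ : ℝ} (hC : 0 ≤ C) (hγ : 0 ≤ γ) {t : ℝ}
    {w : EuclideanSpace ℝ (Fin n) × ℝ} (hw : w ∈ sourceBox n t) :
    C * (t / 4) ^ γ ≤ profile n C γ w := by
  obtain ⟨hξ, hτ₁, -⟩ := hw
  rw [mem_ball_zero_iff] at hξ
  have ht : 0 < t := Real.sqrt_pos.mp (by linarith [norm_nonneg w.1])
  have hξ' : ‖w.1‖ ^ 2 < t / 4 := by
    calc ‖w.1‖ ^ 2 < (√t / 2) ^ 2 := by gcongr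
      _ = t / 4 := by rw [div_pow, Real.sq_sqrt ht.le]; norm_num
  rw [profile_of_mem (show w ∈ paraboloid n from hξ'.trans hτ₁)]
  gcongr

end SourceBox

/-- The product of the lower bound of `Φ_α` on `sourceBox n t`, the factor `4^{-γ}` lost by
evaluating the profile at time `t/4`, and the volume of `sourceBox n t`, with the powers of `t`
removed. -/
def profileConst (n : ℕ) (α γ : ℝ) : ℝ :=
  min ((2 : ℝ) ^ (-(α - 1))) 1 / Real.Gamma α * Real.exp (-(9 / 8)) *
    (volume (ball (0 : EuclideanSpace ℝ (Fin n)) 1)).toReal /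
      ((4 * π) ^ ((n : ℝ) / 2) * 4 ^ γ * 2 ^ n * 4)

lemma profileConst_pos (n : ℕ) {α : ℝ} (hα : 0 < α) (γ : ℝ) : 0 < profileConst n α γ := by
  have hball : 0 < (volume (ball (0 : EuclideanSpace ℝ (Fin n)) 1)).toReal :=
    ENNReal.toReal_pos (measure_ball_pos _ _ one_pos).ne' measure_ball_lt_top.ne
  have := Real.Gamma_pos_of_pos hα
  unfold profileConst
  positivity

lemma profileConst_mul_eq {n : ℕ} {α γ C t : ℝ} (ht : 0 < t) :
    min ((2 : ℝ) ^ (-(α - 1))) 1 * t ^ (α - 1) / Real.Gamma α * (4 * π * t) ^ (-(n : ℝ) / 2) *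
        Real.exp (-(9 / 8)) * (C * (t / 4) ^ γ) *
        ((√t / 2) ^ n * (volume (ball (0 : EuclideanSpace ℝ (Fin n)) 1)).toReal * (t / 4)) =
      profileConst n α γ * t ^ α * (C * t ^ γ) := by
  have hsqrt : √t ^ n = t ^ ((n : ℝ) / 2) := by
    rw [Real.sqrt_eq_rpow, ← Real.rpow_natCast, ← Real.rpow_mul ht.le, one_div_mul_eq_div]
  rw [Real.rpow_sub_one ht.ne', neg_div, Real.rpow_neg (by positivity : (0 : ℝ) ≤ 4 * π * t),
    Real.mul_rpow (by positivity) ht.le, Real.div_rpow ht.le zero_le_four, div_pow, hsqrt,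
    profileConst]
  have : 0 < t ^ ((n : ℝ) / 2) := by positivity
  field_simp

lemma JE_profile_ge {n : ℕ} {α γ C : ℝ} (hα : 0 < α) (hγ : 0 ≤ γ) (hC : 0 ≤ C)
    (z : EuclideanSpace ℝ (Fin n) × ℝ) :
    ENNReal.ofReal (profileConst n α γ * z.2 ^ α * profile n C γ z) ≤
      JE n α (profile n C γ) z := by
  by_cases hz : z ∈ paraboloid n
  swap
  · simp [profile_of_notMem hz]
  obtain ⟨x, t⟩ := z
  have ht : 0 < t := pos_of_mem_paraboloid hz
  set lower := min ((2 : ℝ) ^ (-(α - 1))) 1 * t ^ (α - 1) / Real.Gamma α *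
    (4 * π * t) ^ (-(n : ℝ) / 2) * Real.exp (-(9 / 8)) * (C * (t / 4) ^ γ)
  have hlower : 0 ≤ lower := by
    have := Real.Gamma_pos_of_pos hα
    positivity
  calc ENNReal.ofReal (profileConst n α γ * t ^ α * profile n C γ (x, t))
      = ENNReal.ofReal lower * volume (sourceBox n t) := by
        rw [volume_sourceBox ht, ← ENNReal.ofReal_mul hlower, profileConst_mul_eq ht,
          profile_of_mem hz]
    _ = ∫⁻ _ in sourceBox n t, ENNReal.ofReal lower := (setLIntegral_const _ _).symm
    _ ≤ ∫⁻ w in sourceBox n t, ENNReal.ofReal (Phi n α (x - w.1) (t - w.2) * profile n C γ w) :=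
        setLIntegral_mono' (measurableSet_sourceBox t) fun w hw => ENNReal.ofReal_le_ofReal <|
          mul_le_mul (Phi_ge_of_mem_sourceBox hα hz hw) (profile_ge_of_mem_sourceBox hC hγ hw)
            (by positivity) ((Phi_ge_of_mem_sourceBox hα hz hw).trans' (by positivity))
    _ ≤ JE n α (profile n C γ) (x, t) := setLIntegral_le_lintegral _ _

lemma rpow_one_div_one_sub_eq_mul {K u lam : ℝ} (hu : 0 < u) (hlam : lam < 1) :
    K ^ (1 / (1 - lam)) * u ^ (1 / (1 - lam)) =
      u * (K ^ (1 / (1 - lam)) * u ^ (lam / (1 - lam))) := by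
  have hexp : lam / (1 - lam) + 1 = 1 / (1 - lam) := by
    field_simp [(sub_pos.mpr hlam).ne']
    ring
  rw [← hexp, Real.rpow_add_one hu.ne']
  ring

lemma isFixedPt_mul_rpow {K u lam : ℝ} (hK : 0 < K) (hu : 0 < u) (hlam : lam < 1) :
    Function.IsFixedPt (fun b => K * (u * b) ^ lam)
      (K ^ (1 / (1 - lam)) * u ^ (lam / (1 - lam))) := by
  have hexp : 1 + 1 / (1 - lam) * lam = 1 / (1 - lam) := by
    field_simp [(sub_pos.mpr hlam).ne']
    ring
  show K * _ ^ lam = _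
  rw [← rpow_one_div_one_sub_eq_mul hu hlam, Real.mul_rpow (by positivity) (by positivity),
    ← Real.rpow_mul hK.le, ← Real.rpow_mul hu.le, ← mul_assoc,
    ← Real.rpow_one_add' hK.le (by rw [hexp]; positivity), hexp, one_div_mul_eq_div]

end

theorem stmt11_general (n : ℕ) (p K lam α : ℝ)
    (hK : 0 < K) (hlam0 : 0 < lam) (hlam1 : lam < 1) (hα : 0 < α) :
    ∃ N : ℝ, 0 < N ∧ ∃ f : EuclideanSpace ℝ (Fin n) × ℝ → ℝ,
      Measurable f ∧ (∀ z, 0 ≤ f z) ∧ MemXp n (ENNReal.ofReal p) f ∧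
      (∀ᵐ z : EuclideanSpace ℝ (Fin n) × ℝ,
        ENNReal.ofReal (f z) ≤ ENNReal.ofReal K * JE n α f z ^ lam) ∧
      (∀ᵐ z : EuclideanSpace ℝ (Fin n) × ℝ, z.2 < 0 → f z = 0) ∧
      (∀ z : EuclideanSpace ℝ (Fin n) × ℝ, ‖z.1‖ ^ 2 < z.2 →
        K ^ (1 / (1 - lam)) * (N * z.2 ^ α) ^ (lam / (1 - lam)) ≤ f z) ∧
      (∀ z : EuclideanSpace ℝ (Fin n) × ℝ, ‖z.1‖ ^ 2 < z.2 →
        ENNReal.ofReal (K ^ (1 / (1 - lam)) * (N * z.2 ^ α) ^ (1 / (1 - lam))) ≤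
          JE n α f z) := by
  set γ := α * (lam / (1 - lam))
  have hγ : 0 ≤ γ := by
    have := sub_pos.mpr hlam1
    positivity
  set N := profileConst n α γ
  have hN : 0 < N := profileConst_pos n hα γ
  set C := K ^ (1 / (1 - lam)) * N ^ (lam / (1 - lam))
  have hC : 0 ≤ C := by positivity
  have hu : ∀ z ∈ paraboloid n, 0 < N * z.2 ^ α := fun z hz =>
    mul_pos hN (Real.rpow_pos_of_pos (pos_of_mem_paraboloid hz) _)
  have hf : ∀ z ∈ paraboloid n,
      profile n C γ z = K ^ (1 / (1 - lam)) * (N * z.2 ^ α) ^ (lam / (1 - lam)) :=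
    fun z hz => profile_mul_rpow_of_mem hN.le hz
  have hJ (z) : ENNReal.ofReal (N * z.2 ^ α * profile n C γ z) ≤ JE n α (profile n C γ) z :=
    JE_profile_ge hα hγ hC z
  refine ⟨N, hN, profile n C γ, measurable_profile C γ, profile_nonneg hC γ, memXp_profile _ hC hγ,
    ae_of_all _ fun z => ?_, ae_of_all _ fun z hz => ?_, fun z hz => (hf z hz).ge, fun z hz => ?_⟩
  · by_cases hz : z ∈ paraboloid n
    · calc ENNReal.ofReal (profile n C γ z)
          = ENNReal.ofReal K * ENNReal.ofReal (N * z.2 ^ α * profile n C γ z) ^ lam := by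
            rw [ENNReal.ofReal_rpow_of_nonneg (mul_nonneg (hu z hz).le (profile_nonneg hC γ z))
              hlam0.le, ← ENNReal.ofReal_mul hK.le, hf z hz]
            exact congrArg ENNReal.ofReal (isFixedPt_mul_rpow hK (hu z hz) hlam1).symm
        _ ≤ ENNReal.ofReal K * JE n α (profile n C γ) z ^ lam := by gcongr; exact hJ z
    · simp [profile_of_notMem hz]
  · exact profile_of_notMem fun hz' => (pos_of_mem_paraboloid hz').not_gt hz
  · rw [rpow_one_div_one_sub_eq_mul (hu z hz) hlam1, ← hf z hz]
    exact hJ z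

theorem stmt11 (n : ℕ) (hn : 1 ≤ n) (p K lam α : ℝ)
    (hp : 1 ≤ p) (hK : 0 < K) (hlam0 : 0 < lam) (hlam1 : lam < 1) (hα : 0 < α) :
    ∃ N : ℝ, 0 < N ∧ ∃ f : EuclideanSpace ℝ (Fin n) × ℝ → ℝ,
      Measurable f ∧ (∀ z, 0 ≤ f z) ∧ MemXp n (ENNReal.ofReal p) f ∧
      (∀ᵐ z : EuclideanSpace ℝ (Fin n) × ℝ,
        ENNReal.ofReal (f z) ≤ ENNReal.ofReal K * JE n α f z ^ lam) ∧
      (∀ᵐ z : EuclideanSpace ℝ (Fin n) × ℝ, z.2 < 0 → f z = 0) ∧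
      (∀ z : EuclideanSpace ℝ (Fin n) × ℝ, ‖z.1‖ ^ 2 < z.2 →
        K ^ (1 / (1 - lam)) * (N * z.2 ^ α) ^ (lam / (1 - lam)) ≤ f z) ∧
      (∀ z : EuclideanSpace ℝ (Fin n) × ℝ, ‖z.1‖ ^ 2 < z.2 →
        ENNReal.ofReal (K ^ (1 / (1 - lam)) * (N * z.2 ^ α) ^ (1 / (1 - lam))) ≤
          JE n α f z) :=
  stmt11_general n p K lam α hK hlam0 hlam1 hα
end

section
/- For all α, β > 0 and all (x,t) ∈ ℝⁿ×ℝ, the convolution identity Φ_{α+β}(x,t) = ∬_{ℝⁿ×ℝ} Φ_α(x−ξ, t−τ)·Φ_β(ξ,τ) dξ dτ holds (in particular the convolution integral is finite for every (x,t)). -/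
open MeasureTheory Real ENNReal

/-!
Both kernels factor as `Φ_α(x,t) = t^(α-1)/Γ(α) · G(x,t)` with `G` the heat kernel. For fixed `τ`
the spatial integral is a convolution of two Gaussians, which by completing the square is again a
Gaussian: `∫ G(x-ξ, t-τ) G(ξ, τ) dξ = G(x, t)`. What remains in `τ` is the beta integral
`∫₀ᵗ (t-τ)^(α-1) τ^(β-1) dτ = Γ(α)Γ(β)/Γ(α+β) · t^(α+β-1)`, and Tonelli–Fubini for the
nonnegative integrand assembles the two.
-/

section HeatKernel

variable {V : Type*} [NormedAddCommGroup V] [InnerProductSpace ℝ V]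

variable (V) in
noncomputable def heatKernel (x : V) (s : ℝ) : ℝ :=
  (4 * π * s) ^ (-(Module.finrank ℝ V : ℝ) / 2) * rexp (-‖x‖ ^ 2 / (4 * s))

lemma norm_sub_sq_div_add_norm_sq_div {s τ : ℝ} (hs : 0 < s) (hτ : 0 < τ) (x ξ : V) :
    ‖x - ξ‖ ^ 2 / (4 * s) + ‖ξ‖ ^ 2 / (4 * τ) =
      (s + τ) / (4 * s * τ) * ‖ξ - (τ / (s + τ)) • x‖ ^ 2 + ‖x‖ ^ 2 / (4 * (s + τ)) := by
  rw [norm_sub_sq_real, norm_sub_sq_real, inner_smul_right, real_inner_comm, norm_smul,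
    Real.norm_of_nonneg (by positivity)]
  field_simp
  ring

lemma heatKernel_mul_heatKernel {s τ : ℝ} (hs : 0 < s) (hτ : 0 < τ) (x ξ : V) :
    heatKernel V (x - ξ) s * heatKernel V ξ τ =
      (4 * π * s) ^ (-(Module.finrank ℝ V : ℝ) / 2) *
        (4 * π * τ) ^ (-(Module.finrank ℝ V : ℝ) / 2) * rexp (-‖x‖ ^ 2 / (4 * (s + τ))) *
        rexp (-((s + τ) / (4 * s * τ)) * ‖ξ - (τ / (s + τ)) • x‖ ^ 2) := by
  have h := norm_sub_sq_div_add_norm_sq_div hs hτ x ξ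
  rw [heatKernel, heatKernel, mul_mul_mul_comm, mul_assoc _ (rexp _), ← Real.exp_add,
    ← Real.exp_add]
  congr 2
  linear_combination -h

lemma rpow_neg_mul_rpow_neg_mul_rpow {s τ : ℝ} (hs : 0 < s) (hτ : 0 < τ) (p : ℝ) :
    (4 * π * s) ^ (-p) * (4 * π * τ) ^ (-p) * (π / ((s + τ) / (4 * s * τ))) ^ p =
      (4 * π * (s + τ)) ^ (-p) := by
  have hq : π / ((s + τ) / (4 * s * τ)) = 4 * π * s * (4 * π * τ) / (4 * π * (s + τ)) := by
    field_simp
  rw [hq, Real.rpow_neg (by positivity), Real.rpow_neg (by positivity),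
    Real.rpow_neg (by positivity), Real.div_rpow (by positivity) (by positivity),
    Real.mul_rpow (x := 4 * π * s) (by positivity) (by positivity)]
  have : (4 * π * s) ^ p ≠ 0 := by positivity
  have : (4 * π * τ) ^ p ≠ 0 := by positivity
  field_simp

variable [FiniteDimensional ℝ V] [MeasurableSpace V] [BorelSpace V]

lemma integrable_exp_neg_mul_sq_norm_sub {b : ℝ} (hb : 0 < b) (y : V) :
    Integrable fun v : V => rexp (-b * ‖v - y‖ ^ 2) := by
  refine Integrable.comp_sub_right (f := fun v : V => rexp (-b * ‖v‖ ^ 2))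
    (.of_integral_ne_zero ?_) y
  rw [GaussianFourier.integral_rexp_neg_mul_sq_norm hb]
  positivity

lemma integrable_and_integral_heatKernel_sub_mul_heatKernel {s τ : ℝ} (hs : 0 < s) (hτ : 0 < τ)
    (x : V) :
    (Integrable fun ξ => heatKernel V (x - ξ) s * heatKernel V ξ τ) ∧
      ∫ ξ, heatKernel V (x - ξ) s * heatKernel V ξ τ = heatKernel V x (s + τ) := by
  simp_rw [heatKernel_mul_heatKernel hs hτ]
  refine ⟨(integrable_exp_neg_mul_sq_norm_sub (by positivity) _).const_mul _, ?_⟩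
  rw [integral_const_mul, integral_sub_right_eq_self
      (fun ξ => rexp (-((s + τ) / (4 * s * τ)) * ‖ξ‖ ^ 2)),
    GaussianFourier.integral_rexp_neg_mul_sq_norm (by positivity), heatKernel, neg_div,
    ← rpow_neg_mul_rpow_neg_mul_rpow hs hτ]
  ring

end HeatKernel

section Beta

lemma integral_sub_rpow_mul_rpow {a b t : ℝ} (ha : 0 < a) (hb : 0 < b) (ht : 0 < t) :
    ∫ τ in 0..t, (t - τ) ^ (a - 1) * τ ^ (b - 1) =
      Real.Gamma a * Real.Gamma b / Real.Gamma (a + b) * t ^ (a + b - 1) := by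
  have hcpow : Set.EqOn (fun τ : ℝ => (((t - τ) ^ (a - 1) * τ ^ (b - 1) : ℝ) : ℂ))
      (fun τ : ℝ => (τ : ℂ) ^ ((b : ℂ) - 1) * ((t : ℂ) - τ) ^ ((a : ℂ) - 1)) (Set.uIcc 0 t) := by
    intro τ hτ
    rw [Set.uIcc_of_le ht.le] at hτ
    push_cast [Complex.ofReal_cpow (sub_nonneg.2 hτ.2), Complex.ofReal_cpow hτ.1]
    ring
  rw [← Complex.ofReal_inj, ← intervalIntegral.integral_ofReal,
    intervalIntegral.integral_congr hcpow, Complex.betaIntegral_scaled _ _ ht,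
    Complex.betaIntegral_eq_Gamma_mul_div _ _ (by simpa) (by simpa), Complex.ofReal_mul,
    Complex.ofReal_cpow ht.le]
  push_cast [← Complex.Gamma_ofReal]
  ring_nf

lemma intervalIntegrable_sub_rpow_mul_rpow {a b t : ℝ} (ha : 0 < a) (hb : 0 < b) (ht : 0 < t) :
    IntervalIntegrable (fun τ => (t - τ) ^ (a - 1) * τ ^ (b - 1)) volume 0 t := by
  refine intervalIntegral.intervalIntegrable_of_integral_ne_zero ?_
  rw [integral_sub_rpow_mul_rpow ha hb ht]
  have := Real.Gamma_pos_of_pos ha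
  have := Real.Gamma_pos_of_pos hb
  have := Real.Gamma_pos_of_pos (add_pos ha hb)
  positivity

end Beta

section Phi

variable {n : ℕ} {α β : ℝ}

lemma Phi_of_pos (x : EuclideanSpace ℝ (Fin n)) {t : ℝ} (ht : 0 < t) :
    Phi n α x t = t ^ (α - 1) / Real.Gamma α * heatKernel _ x t := by
  rw [Phi, if_pos ht, heatKernel, finrank_euclideanSpace_fin, mul_assoc]

lemma Phi_of_nonpos (x : EuclideanSpace ℝ (Fin n)) {t : ℝ} (ht : t ≤ 0) : Phi n α x t = 0 :=
  if_neg ht.not_gt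

lemma Phi_nonneg (hα : 0 < α) (x : EuclideanSpace ℝ (Fin n)) (t : ℝ) : 0 ≤ Phi n α x t := by
  have := Real.Gamma_pos_of_pos hα
  unfold Phi
  split_ifs <;> positivity

lemma measurable_Phi : Measurable fun z : EuclideanSpace ℝ (Fin n) × ℝ => Phi n α z.1 z.2 :=
  Measurable.ite (measurableSet_lt measurable_const measurable_snd) (by fun_prop) measurable_const

lemma Phi_sub_mul_Phi_eq_zero (x ξ : EuclideanSpace ℝ (Fin n)) {t τ : ℝ}
    (hτ : τ ∉ Set.Ioo 0 t) : Phi n α (x - ξ) (t - τ) * Phi n β ξ τ = 0 := by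
  rcases le_or_gt τ 0 with hτ₀ | hτ₀
  · rw [Phi_of_nonpos ξ hτ₀, mul_zero]
  · rw [Phi_of_nonpos _ (by simpa [hτ₀] using hτ), zero_mul]

lemma measurable_Phi_sub_mul_Phi (x : EuclideanSpace ℝ (Fin n)) (t : ℝ) :
    Measurable fun w : EuclideanSpace ℝ (Fin n) × ℝ =>
      Phi n α (x - w.1) (t - w.2) * Phi n β w.1 w.2 :=
  (measurable_Phi.comp (f := fun w : EuclideanSpace ℝ (Fin n) × ℝ => (x - w.1, t - w.2))
    (by fun_prop)).mul measurable_Phi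

lemma integrable_and_integral_Phi_sub_mul_Phi (x : EuclideanSpace ℝ (Fin n)) (t τ : ℝ) :
    (Integrable fun ξ => Phi n α (x - ξ) (t - τ) * Phi n β ξ τ) ∧
      ∫ ξ, Phi n α (x - ξ) (t - τ) * Phi n β ξ τ =
        (Set.Ioo 0 t).indicator (fun τ => (t - τ) ^ (α - 1) * τ ^ (β - 1) *
          (heatKernel _ x t / (Real.Gamma α * Real.Gamma β))) τ := by
  by_cases hτ : τ ∈ Set.Ioo 0 t
  · have hs : 0 < t - τ := sub_pos.2 hτ.2
    obtain ⟨hint, hval⟩ := integrable_and_integral_heatKernel_sub_mul_heatKernel hs hτ.1 x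
    simp_rw [Phi_of_pos _ hs, Phi_of_pos _ hτ.1, mul_mul_mul_comm]
    refine ⟨hint.const_mul _, ?_⟩
    rw [integral_const_mul, hval, sub_add_cancel, Set.indicator_of_mem hτ]
    ring
  · simp_rw [Phi_sub_mul_Phi_eq_zero x _ hτ, Set.indicator_of_notMem hτ]
    exact ⟨integrable_zero _ _ _, integral_zero _ _⟩

end Phi

lemma integrable_and_integral_eq_of_integral_fiber {X Y : Type*} [MeasurableSpace X]
    [MeasurableSpace Y] {μ : Measure X} {ν : Measure Y} [SFinite μ] [SFinite ν]
    {F : X × Y → ℝ} (hF : AEStronglyMeasurable F (μ.prod ν)) (hF₀ : 0 ≤ F) {g : Y → ℝ}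
    (hfib : ∀ᵐ y ∂ν, Integrable (fun x => F (x, y)) μ)
    (hg : ∀ᵐ y ∂ν, ∫ x, F (x, y) ∂μ = g y) (hgi : Integrable g ν) :
    Integrable F (μ.prod ν) ∧ ∫ z, F z ∂(μ.prod ν) = ∫ y, g y ∂ν := by
  have hnorm : (fun y => ∫ x, ‖F (x, y)‖ ∂μ) =ᵐ[ν] g := by
    filter_upwards [hg] with y hy
    simp_rw [Real.norm_of_nonneg (hF₀ _), hy]
  have hFi : Integrable F (μ.prod ν) :=
    (integrable_prod_iff' hF).2 ⟨hfib, hgi.congr hnorm.symm⟩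
  exact ⟨hFi, (integral_prod_symm F hFi).trans (integral_congr_ae hg)⟩

theorem stmt14_general (n : ℕ) (α β : ℝ) (hα : 0 < α) (hβ : 0 < β)
    (x : EuclideanSpace ℝ (Fin n)) (t : ℝ) :
    Integrable (fun w : EuclideanSpace ℝ (Fin n) × ℝ =>
      Phi n α (x - w.1) (t - w.2) * Phi n β w.1 w.2) ∧
    Phi n (α + β) x t =
      ∫ w : EuclideanSpace ℝ (Fin n) × ℝ,
        Phi n α (x - w.1) (t - w.2) * Phi n β w.1 w.2 := by
  rcases le_or_gt t 0 with ht | ht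
  · have hzero : (fun w : EuclideanSpace ℝ (Fin n) × ℝ =>
        Phi n α (x - w.1) (t - w.2) * Phi n β w.1 w.2) = 0 :=
      funext fun w => Phi_sub_mul_Phi_eq_zero _ _ fun hw => (hw.1.trans hw.2).not_ge ht
    rw [hzero, Phi_of_nonpos x ht, integral_zero']
    exact ⟨integrable_zero _ _ _, rfl⟩
  have hbeta := ((intervalIntegrable_sub_rpow_mul_rpow hα hβ ht).1.mono_set
    Set.Ioo_subset_Ioc_self).mul_const (heatKernel _ x t / (Real.Gamma α * Real.Gamma β))
  obtain ⟨hint, hval⟩ := integrable_and_integral_eq_of_integral_fiber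
    (measurable_Phi_sub_mul_Phi x t).aestronglyMeasurable
    (fun w => mul_nonneg (Phi_nonneg hα _ _) (Phi_nonneg hβ _ _))
    (.of_forall fun τ => (integrable_and_integral_Phi_sub_mul_Phi x t τ).1)
    (.of_forall fun τ => (integrable_and_integral_Phi_sub_mul_Phi x t τ).2)
    ((integrable_indicator_iff measurableSet_Ioo).2 hbeta)
  rw [Measure.volume_eq_prod]
  refine ⟨hint, ?_⟩
  rw [hval, integral_indicator measurableSet_Ioo, integral_mul_const,
    ← integral_Ioc_eq_integral_Ioo, ← intervalIntegral.integral_of_le ht.le,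
    integral_sub_rpow_mul_rpow hα hβ ht, Phi_of_pos x ht]
  have := (Real.Gamma_pos_of_pos hα).ne'
  have := (Real.Gamma_pos_of_pos hβ).ne'
  field_simp

theorem stmt14 (n : ℕ) (hn : 1 ≤ n) (α β : ℝ) (hα : 0 < α) (hβ : 0 < β)
    (x : EuclideanSpace ℝ (Fin n)) (t : ℝ) :
    Integrable (fun w : EuclideanSpace ℝ (Fin n) × ℝ =>
      Phi n α (x - w.1) (t - w.2) * Phi n β w.1 w.2) ∧
    Phi n (α + β) x t =
      ∫ w : EuclideanSpace ℝ (Fin n) × ℝ,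
        Phi n α (x - w.1) (t - w.2) * Phi n β w.1 w.2 :=
  stmt14_general n α β hα hβ x t
end

section
/- There exists a constant C = C(n) > 0 such that for all x ∈ ℝⁿ and all t, τ ∈ (0,∞) satisfying |x|² < t and t/4 < τ < 3t/4, one has ∫_{{ξ ∈ ℝⁿ : |ξ|² < τ}} Φ_1(x−ξ, t−τ) dξ ≥ C. -/
open MeasureTheory Real ENNReal

/-!
For `t/4 < τ < 3t/4` the time lag `s = t - τ` is comparable to `t`. On the ball `|ξ| < √t/2`, which
lies in `{|ξ|² < τ}`, we have `|x - ξ| ≤ 3√t/2`, so `Φ_1(x - ξ, s) ≥ (3πt)^{-n/2} e^{-9/4}`. The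
ball has volume `(√t/2)^n` times that of the unit ball, and the powers of `t` cancel.
-/

open Metric

lemma Phi_one_of_pos {n : ℕ} (x : EuclideanSpace ℝ (Fin n)) {s : ℝ} (hs : 0 < s) :
    Phi n 1 x s = (4 * π * s) ^ (-(n : ℝ) / 2) * exp (-‖x‖ ^ 2 / (4 * s)) := by
  simp [Phi, hs]

lemma Phi_one_nonneg (n : ℕ) (x : EuclideanSpace ℝ (Fin n)) (s : ℝ) : 0 ≤ Phi n 1 x s := by
  rcases lt_or_ge 0 s with hs | hs
  · rw [Phi_one_of_pos x hs]; positivity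
  · simp [Phi, hs.not_gt]

lemma continuous_Phi_one {n : ℕ} {s : ℝ} (hs : 0 < s) :
    Continuous fun x : EuclideanSpace ℝ (Fin n) ↦ Phi n 1 x s := by
  simp only [Phi_one_of_pos _ hs]
  fun_prop

lemma le_Phi_one_of_norm_sq_le {n : ℕ} {y : EuclideanSpace ℝ (Fin n)} {s t : ℝ} (hts : t < 4 * s)
    (hst : 4 * s < 3 * t) (hy : ‖y‖ ^ 2 ≤ 9 * t / 4) :
    (3 * π * t) ^ (-(n : ℝ) / 2) * exp (-(9 / 4)) ≤ Phi n 1 y s := by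
  have hs : 0 < s := by linarith
  rw [Phi_one_of_pos y hs]
  gcongr ?_ * exp ?_
  · exact rpow_le_rpow_of_nonpos (by positivity) (by nlinarith [pi_pos])
      (by rw [neg_div]; exact neg_nonpos.2 (by positivity))
  · rw [neg_div, neg_le_neg_iff, div_le_iff₀ (by positivity)]
    linarith

lemma norm_sub_sq_le_of_norm_sq_lt {E : Type*} [SeminormedAddCommGroup E] {x ξ : E} {t : ℝ}
    (ht : 0 < t) (hx : ‖x‖ ^ 2 < t) (hξ : ‖ξ‖ < √t / 2) : ‖x - ξ‖ ^ 2 ≤ 9 * t / 4 := by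
  have hxt : ‖x‖ ≤ √t := (le_sqrt (norm_nonneg x) ht.le).2 hx.le
  have hxξ : ‖x - ξ‖ ≤ 3 / 2 * √t := by linarith [norm_sub_le x ξ]
  nlinarith [norm_nonneg (x - ξ), sq_sqrt ht.le]

lemma setOf_norm_sq_lt_eq_ball {E : Type*} [SeminormedAddCommGroup E] (τ : ℝ) :
    {ξ : E | ‖ξ‖ ^ 2 < τ} = ball 0 √τ := by
  ext ξ
  simp [lt_sqrt (norm_nonneg ξ)]

lemma volume_real_ball_of_pos {n : ℕ} {r : ℝ} (hr : 0 < r) :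
    volume.real (ball (0 : EuclideanSpace ℝ (Fin n)) r) =
      r ^ n * volume.real (ball (0 : EuclideanSpace ℝ (Fin n)) 1) := by
  simp [measureReal_def, Measure.addHaar_ball_of_pos _ _ hr, ENNReal.toReal_mul, hr.le]

lemma mul_rpow_neg_half_mul_sqrt_div_two_pow (n : ℕ) {a t : ℝ} (ha : 0 ≤ a) (ht : 0 < t) :
    (a * t) ^ (-(n : ℝ) / 2) * (√t / 2) ^ n = a ^ (-(n : ℝ) / 2) / 2 ^ n := by
  have hsqrt : √t ^ n = t ^ ((n : ℝ) / 2) := by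
    rw [sqrt_eq_rpow, ← Real.rpow_natCast, ← rpow_mul ht.le, one_div_mul_eq_div]
  have ht' : t ^ ((n : ℝ) / 2) ≠ 0 := (rpow_pos_of_pos ht _).ne'
  rw [mul_rpow ha ht.le, div_pow, hsqrt, neg_div, rpow_neg ht.le]
  field_simp

theorem stmt19_general (n : ℕ) :
    ∃ C : ℝ, 0 < C ∧ ∀ (x : EuclideanSpace ℝ (Fin n)) (t τ : ℝ),
      0 < t → 0 < τ → ‖x‖ ^ 2 < t → t / 4 < τ → τ < 3 * t / 4 →
      C ≤ ∫ ξ in {ξ : EuclideanSpace ℝ (Fin n) | ‖ξ‖ ^ 2 < τ},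
            Phi n 1 (x - ξ) (t - τ) := by
  have hunit : 0 < volume.real (ball (0 : EuclideanSpace ℝ (Fin n)) 1) :=
    ENNReal.toReal_pos (measure_ball_pos _ _ one_pos).ne' measure_ball_lt_top.ne
  refine ⟨(3 * π) ^ (-(n : ℝ) / 2) / 2 ^ n * exp (-(9 / 4)) *
    volume.real (ball (0 : EuclideanSpace ℝ (Fin n)) 1), by positivity, ?_⟩
  intro x t τ ht _ hx hτ₁ hτ₂
  have hr : 0 < √t / 2 := by positivity
  have hball : ball 0 (√t / 2) ⊆ ball (0 : EuclideanSpace ℝ (Fin n)) √τ := by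
    refine ball_subset_ball ((le_sqrt hr.le (by linarith)).2 ?_)
    rw [div_pow, sq_sqrt ht.le]
    linarith
  have hlow : ∀ ξ ∈ ball (0 : EuclideanSpace ℝ (Fin n)) (√t / 2),
      (3 * π * t) ^ (-(n : ℝ) / 2) * exp (-(9 / 4)) ≤ Phi n 1 (x - ξ) (t - τ) :=
    fun ξ hξ ↦ le_Phi_one_of_norm_sq_le (by linarith) (by linarith)
      (norm_sub_sq_le_of_norm_sq_lt ht hx (mem_ball_zero_iff.1 hξ))
  have hint : IntegrableOn (fun ξ ↦ Phi n 1 (x - ξ) (t - τ)) (ball 0 √τ) :=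
    ((continuous_Phi_one (by linarith)).comp (continuous_const.sub continuous_id))
      |>.locallyIntegrable.integrableOn_isCompact (isCompact_closedBall 0 √τ)
      |>.mono_set ball_subset_closedBall
  rw [setOf_norm_sq_lt_eq_ball]
  calc _ = (3 * π * t) ^ (-(n : ℝ) / 2) * exp (-(9 / 4)) * volume.real (ball 0 (√t / 2)) := by
        rw [volume_real_ball_of_pos hr, ← mul_rpow_neg_half_mul_sqrt_div_two_pow n (by positivity) ht]
        ring
    _ ≤ ∫ ξ in ball 0 (√t / 2), Phi n 1 (x - ξ) (t - τ) :=
        setIntegral_ge_of_const_le_real measurableSet_ball measure_ball_lt_top.ne hlow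
          (hint.mono_set hball)
    _ ≤ _ := setIntegral_mono_set hint (.of_forall fun _ ↦ Phi_one_nonneg _ _ _)
        (.of_forall hball)

theorem stmt19 (n : ℕ) (hn : 1 ≤ n) :
    ∃ C : ℝ, 0 < C ∧ ∀ (x : EuclideanSpace ℝ (Fin n)) (t τ : ℝ),
      0 < t → 0 < τ → ‖x‖ ^ 2 < t → t / 4 < τ → τ < 3 * t / 4 →
      C ≤ ∫ ξ in {ξ : EuclideanSpace ℝ (Fin n) | ‖ξ‖ ^ 2 < τ},
            Phi n 1 (x - ξ) (t - τ) :=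
  stmt19_general n
end
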